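/- arXiv:2112.03324 — 5 statements merged into one kernel-verified Lean document; each statement's English description precedes it below -/
import Mathlib

section
/- (Minkowski direction of the Minkowski–Weyl theorem, Theorem 1) For every matrix A ∈ ℝ^{m×n} and every b ∈ ℝ^m, there exist natural numbers p, q and matrices Υ ∈ ℝ^{n×p} and Γ ∈ ℝ^{n×q} such that {z ∈ ℝⁿ | A z ≤ b} = {Υ μ + Γ λ | μ ∈ ℝᵖ, λ ∈ ℝ^q, μ ≥ 0 componentwise, λ ≥ 0 componentwise, Σⱼ λⱼ = 1}. -/
/-!
Homogenise: `A z ≤ b` holds iff `(z, 1)` lies in the cone `{(z, t) | 0 ≤ t, A z ≤ t b}`, an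
intersection of finitely many halfspaces through the origin. Fourier–Motzkin elimination shows
that cutting a finitely generated cone by one more halfspace `{f ≥ 0}` leaves a finitely generated
cone: keep the generators `v` with `f v ≥ 0` and add `f v • w - f w • v` for every pair with
`f v ≥ 0 > f w`. So the homogenised cone is finitely generated. Its generators have `t ≥ 0`;
rescaled to `t ∈ {0, 1}` they split into rays `(u, 0)` and points `(w, 1)`, and slicing at
`t = 1` gives `z = ∑ μ u + ∑ λ w` with `∑ λ = 1`.
-/

open Set

lemma Finset.sum_sum_smul_sub_smul {R E ι : Type*} [CommRing R] [AddCommGroup E] [Module R E]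
    (φ : ι → R) (c : ι → R) (v : ι → E) (s t : Finset ι) :
    ∑ i ∈ s, ∑ j ∈ t, (c i * c j) • (φ i • v j - φ j • v i) =
      (∑ i ∈ s, c i * φ i) • ∑ j ∈ t, c j • v j - (∑ j ∈ t, c j * φ j) • ∑ i ∈ s, c i • v i := by
  simp only [smul_sub, Finset.sum_sub_distrib, Finset.smul_sum, smul_smul, Finset.sum_mul,
    Finset.sum_smul]
  rw [Finset.sum_comm (s := t) (t := s)]
  congr 1 <;> refine Finset.sum_congr rfl fun _ _ => Finset.sum_congr rfl fun _ _ => ?_ <;>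
    congr 1 <;> ring

namespace PointedCone

section OrderedSemiring

variable {R E : Type*} [Semiring R] [PartialOrder R] [IsOrderedRing R] [AddCommMonoid E]
  [Module R E]

lemma mem_hull_range_iff {ι : Type*} [Fintype ι] {v : ι → E} {x : E} :
    x ∈ hull R (range v) ↔ ∃ c : ι → R, (∀ i, 0 ≤ c i) ∧ ∑ i, c i • v i = x := by
  rw [Submodule.mem_span_range_iff_exists_fun]
  constructor
  · rintro ⟨c, rfl⟩
    exact ⟨fun i => c i, fun i => (c i).2, rfl⟩
  · rintro ⟨c, hc, rfl⟩
    exact ⟨fun i => ⟨c i, hc i⟩, rfl⟩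

end OrderedSemiring

variable {𝕜 M ι : Type*} [Field 𝕜] [LinearOrder 𝕜] [AddCommGroup M] [Module 𝕜 M]

def fourierMotzkinGenerators (f : M →ₗ[𝕜] 𝕜) (v : ι → M) : Set M :=
  v '' {i | 0 ≤ f (v i)} ∪
    (fun ij : ι × ι => f (v ij.1) • v ij.2 - f (v ij.2) • v ij.1) ''
      {ij | 0 ≤ f (v ij.1) ∧ f (v ij.2) < 0}

lemma finite_fourierMotzkinGenerators [Finite ι] (f : M →ₗ[𝕜] 𝕜) (v : ι → M) :
    (fourierMotzkinGenerators f v).Finite :=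
  ((toFinite _).image _).union ((toFinite _).image _)

variable [IsStrictOrderedRing 𝕜]

lemma sum_smul_mem_hull_fourierMotzkinGenerators [Fintype ι] (f : M →ₗ[𝕜] 𝕜) (v : ι → M)
    {c : ι → 𝕜} (hc : ∀ i, 0 ≤ c i) (hf : 0 ≤ f (∑ i, c i • v i)) :
    ∑ i, c i • v i ∈ hull 𝕜 (fourierMotzkinGenerators f v) := by
  classical
  set D := hull 𝕜 (fourierMotzkinGenerators f v)
  set P := Finset.univ.filter fun i => 0 ≤ f (v i)
  set N := Finset.univ.filter fun i => ¬ 0 ≤ f (v i)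
  set y := ∑ i ∈ P, c i • v i
  set z := ∑ j ∈ N, c j • v j
  set a := ∑ i ∈ P, c i * f (v i)
  set b := ∑ j ∈ N, c j * f (v j)
  have hx : ∑ i, c i • v i = y + z := (Finset.sum_filter_add_sum_filter_not _ _ _).symm
  have hab : 0 ≤ a + b := by simpa [hx, y, z, a, b, map_sum] using hf
  have ha : 0 ≤ a := Finset.sum_nonneg fun i hi => mul_nonneg (hc i) (Finset.mem_filter.1 hi).2
  have hb : b ≤ 0 := Finset.sum_nonpos fun j hj =>
    mul_nonpos_of_nonneg_of_nonpos (hc j) (not_le.1 (Finset.mem_filter.1 hj).2).le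
  have hy : y ∈ D := Submodule.sum_mem _ fun i hi => D.smul_mem (hc i)
    (subset_hull (mem_union_left _ ⟨i, (Finset.mem_filter.1 hi).2, rfl⟩))
  have hpairs : a • z - b • y ∈ D := by
    rw [← Finset.sum_sum_smul_sub_smul]
    refine Submodule.sum_mem _ fun i hi => Submodule.sum_mem _ fun j hj => ?_
    exact D.smul_mem (mul_nonneg (hc i) (hc j)) (subset_hull (mem_union_right _
      ⟨(i, j), ⟨(Finset.mem_filter.1 hi).2, not_le.1 (Finset.mem_filter.1 hj).2⟩, rfl⟩))
  rcases ha.eq_or_lt with ha | ha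
  · have hz : z = 0 := by
      refine Finset.sum_eq_zero fun j hj => ?_
      have hfj : f (v j) < 0 := not_le.1 (Finset.mem_filter.1 hj).2
      have hcj : c j * f (v j) = 0 := (Finset.sum_eq_zero_iff_of_nonpos fun j hj =>
        mul_nonpos_of_nonneg_of_nonpos (hc j) (not_le.1 (Finset.mem_filter.1 hj).2).le).1
          (le_antisymm hb (by linarith)) j hj
      rw [(mul_eq_zero.1 hcj).resolve_right hfj.ne, zero_smul]
    rwa [hx, hz, add_zero]
  · rw [hx, ← D.smul_mem_iff ha, show a • (y + z) = (a + b) • y + (a • z - b • y) by module]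
    exact add_mem (D.smul_mem hab hy) hpairs

lemma hull_range_inf_comap_positive [Fintype ι] (f : M →ₗ[𝕜] 𝕜) (v : ι → M) :
    hull 𝕜 (range v) ⊓ (positive 𝕜 𝕜).comap f = hull 𝕜 (fourierMotzkinGenerators f v) := by
  refine le_antisymm ?_ (Submodule.span_le.2 ?_)
  · rintro x ⟨hx, hfx⟩
    obtain ⟨c, hc, rfl⟩ := mem_hull_range_iff.1 hx
    exact sum_smul_mem_hull_fourierMotzkinGenerators f v hc hfx
  · rintro _ (⟨i, hi, rfl⟩ | ⟨⟨i, j⟩, ⟨hi, hj⟩, rfl⟩)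
    · exact ⟨subset_hull ⟨i, rfl⟩, hi⟩
    · refine ⟨?_, le_of_eq ?_⟩
      · show f (v i) • v j - f (v j) • v i ∈ hull 𝕜 (range v)
        rw [sub_eq_add_neg, ← neg_smul]
        exact add_mem ((hull 𝕜 _).smul_mem hi (subset_hull ⟨j, rfl⟩))
          ((hull 𝕜 _).smul_mem (neg_nonneg.2 hj.le) (subset_hull ⟨i, rfl⟩))
      · show 0 = f (f (v i) • v j - f (v j) • v i)
        simp only [map_sub, map_smul, smul_eq_mul]; ring

theorem fg_inf_comap_positive {C : PointedCone 𝕜 M} (hC : C.FG) (f : M →ₗ[𝕜] 𝕜) :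
    (C ⊓ (positive 𝕜 𝕜).comap f).FG := by
  obtain ⟨n, v, rfl⟩ := Submodule.fg_iff_exists_fin_generating_family.1 hC
  rw [hull_range_inf_comap_positive]
  exact Submodule.fg_span (finite_fourierMotzkinGenerators f v)

theorem DualFG.fg {N P : Type*} [AddCommGroup N] [Module 𝕜 N] [Module.Finite 𝕜 N]
    [AddCommGroup P] [Module 𝕜 P] {p : P →ₗ[𝕜] N →ₗ[𝕜] 𝕜} {C : PointedCone 𝕜 N}
    (hC : C.DualFG p) : C.FG := by
  classical
  obtain ⟨s, rfl⟩ := hC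
  induction s using Finset.induction_on with
  | empty => simpa using Module.Finite.fg_top
  | insert x s _ ih =>
    rw [Finset.coe_insert, dual_insert, dual_singleton, inf_comm]
    exact fg_inf_comap_positive ih (p x)

lemma mem_hull_rays_points_iff {p q : ℕ} (u : Fin p → M) (w : Fin q → M) (z : M) (t : 𝕜) :
    (z, t) ∈ hull 𝕜 (range (fun i => (u i, (0 : 𝕜))) ∪ range (fun j => (w j, (1 : 𝕜)))) ↔
      ∃ (μ : Fin p → 𝕜) (l : Fin q → 𝕜), (∀ i, 0 ≤ μ i) ∧ (∀ j, 0 ≤ l j) ∧ ∑ j, l j = t ∧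
        z = ∑ i, μ i • u i + ∑ j, l j • w j := by
  have hsum (c : Fin p ⊕ Fin q → 𝕜) :
      ∑ k, c k • Sum.elim (fun i => (u i, (0 : 𝕜))) (fun j => (w j, 1)) k =
        (∑ i, c (.inl i) • u i + ∑ j, c (.inr j) • w j, ∑ j, c (.inr j)) := by
    simp [Fintype.sum_sum_type, Prod.ext_iff, Prod.fst_sum, Prod.snd_sum]
  simp only [← Set.Sum.elim_range, mem_hull_range_iff, hsum, Prod.ext_iff]
  constructor
  · rintro ⟨c, hc, hz, ht⟩
    exact ⟨_, _, fun i => hc _, fun j => hc _, ht, hz.symm⟩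
  · rintro ⟨μ, l, hμ, hl, ht, rfl⟩
    exact ⟨Sum.elim μ l, Sum.forall.2 ⟨hμ, hl⟩, rfl, ht⟩

theorem exists_rays_points_of_fg {K : PointedCone 𝕜 (M × 𝕜)} (hK : K.FG)
    (hK₀ : ∀ x ∈ K, 0 ≤ x.2) :
    ∃ (p q : ℕ) (u : Fin p → M) (w : Fin q → M),
      K = hull 𝕜 (range (fun i => (u i, (0 : 𝕜))) ∪ range (fun j => (w j, (1 : 𝕜)))) := by
  classical
  obtain ⟨n, g, rfl⟩ := Submodule.fg_iff_exists_fin_generating_family.1 hK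
  have hg₀ (i : Fin n) : 0 ≤ (g i).2 := hK₀ _ (subset_hull ⟨i, rfl⟩)
  let eR := Fintype.equivFin {i // (g i).2 = 0}
  let eP := Fintype.equivFin {i // (g i).2 ≠ 0}
  refine ⟨_, _, fun k => (g (eR.symm k)).1, fun k => (g (eP.symm k)).2⁻¹ • (g (eP.symm k)).1,
    le_antisymm (Submodule.span_le.2 ?_) (Submodule.span_le.2 ?_)⟩
  · rintro _ ⟨i, rfl⟩
    by_cases hi : (g i).2 = 0
    · refine subset_hull (mem_union_left _ ⟨eR ⟨i, hi⟩, ?_⟩)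
      simp [← hi]
    · have hgi : g i = (g i).2 • ((g i).2⁻¹ • (g i).1, (1 : 𝕜)) := by
        ext <;> simp [hi]
      rw [hgi]
      exact smul_mem _ (hg₀ i) (subset_hull (mem_union_right _ ⟨eP ⟨i, hi⟩, by simp⟩))
  · rintro _ (⟨k, rfl⟩ | ⟨k, rfl⟩)
    · have hk : ((g (eR.symm k)).1, (0 : 𝕜)) = g (eR.symm k) := Prod.ext rfl (eR.symm k).2.symm
      simp only [hk]
      exact subset_hull ⟨_, rfl⟩
    · have hk : ((g (eP.symm k)).2⁻¹ • (g (eP.symm k)).1, (1 : 𝕜)) =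
          (g (eP.symm k)).2⁻¹ • g (eP.symm k) := Prod.ext rfl (by simp [(eP.symm k).2])
      simp only [hk]
      exact smul_mem _ (inv_nonneg.2 (hg₀ _)) (subset_hull ⟨_, rfl⟩)

end PointedCone

open PointedCone in
theorem exists_eq_rays_add_points {𝕜 M ι : Type*} [Field 𝕜] [LinearOrder 𝕜]
    [IsStrictOrderedRing 𝕜] [AddCommGroup M] [Module 𝕜 M] [Module.Finite 𝕜 M] [Finite ι]
    (f : ι → M →ₗ[𝕜] 𝕜) (b : ι → 𝕜) :
    ∃ (p q : ℕ) (u : Fin p → M) (w : Fin q → M),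
      {z | ∀ i, f i z ≤ b i} =
        {z | ∃ (μ : Fin p → 𝕜) (l : Fin q → 𝕜), (∀ i, 0 ≤ μ i) ∧ (∀ j, 0 ≤ l j) ∧ ∑ j, l j = 1 ∧
          z = ∑ i, μ i • u i + ∑ j, l j • w j} := by
  set K : PointedCone 𝕜 (M × 𝕜) := dual .id (insert (LinearMap.snd 𝕜 M 𝕜)
    (range fun i => b i • LinearMap.snd 𝕜 M 𝕜 - f i ∘ₗ LinearMap.fst 𝕜 M 𝕜))
  have hK : K.FG := (DualFG.dual_of_finite _ (toFinite _)).fg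
  obtain ⟨p, q, u, w, hKuw⟩ := exists_rays_points_of_fg hK fun x hx => hx (mem_insert _ _)
  refine ⟨p, q, u, w, Set.ext fun z => ?_⟩
  have hz : (z, (1 : 𝕜)) ∈ K ↔ ∀ i, f i z ≤ b i := by simp [K]
  rw [mem_ofPred_eq, ← hz, hKuw, mem_hull_rays_points_iff]
  rfl

/-- Minkowski direction of the Minkowski–Weyl theorem: every polyhedron
`{z | A z ≤ b}` is a finitely generated set `{Υ μ + Γ λ | μ ≥ 0, λ ≥ 0, ∑ λ = 1}`. -/
theorem minkowski_direction (m n : ℕ) (A : Matrix (Fin m) (Fin n) ℝ) (b : Fin m → ℝ) :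
    ∃ (p q : ℕ) (Υ : Matrix (Fin n) (Fin p) ℝ) (Γ : Matrix (Fin n) (Fin q) ℝ),
      {z : Fin n → ℝ | ∀ i, A.mulVec z i ≤ b i} =
      {z : Fin n → ℝ | ∃ (μ : Fin p → ℝ) (l : Fin q → ℝ),
        (∀ i, 0 ≤ μ i) ∧ (∀ j, 0 ≤ l j) ∧ (∑ j, l j) = 1 ∧
        z = Υ.mulVec μ + Γ.mulVec l} := by
  obtain ⟨p, q, u, w, h⟩ :=
    exists_eq_rays_add_points (fun i => LinearMap.proj i ∘ₗ A.mulVecLin) b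
  refine ⟨p, q, (Matrix.of u).transpose, (Matrix.of w).transpose, ?_⟩
  simp only [Matrix.mulVec_transpose, Matrix.vecMul_eq_sum]
  exact h
end

section
/- (Weyl direction of the Minkowski–Weyl theorem, Theorem 1) For every pair of matrices Υ ∈ ℝ^{n×p} and Γ ∈ ℝ^{n×q}, there exist a natural number m, a matrix A ∈ ℝ^{m×n} and a vector b ∈ ℝ^m such that {Υ μ + Γ λ | μ ∈ ℝᵖ, λ ∈ ℝ^q, μ ≥ 0 componentwise, λ ≥ 0 componentwise, Σⱼ λⱼ = 1} = {z ∈ ℝⁿ | A z ≤ b}. -/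
open Finset

/-- A set is polyhedral: intersection of finitely many halfspaces. -/
def IsPolyhedralMW {k : ℕ} (S : Set (Fin k → ℝ)) : Prop :=
  ∃ (ι : Type) (_ : Fintype ι) (c : ι → Fin k → ℝ) (d : ι → ℝ),
    S = {x | ∀ i, ∑ j, c i j * x j ≤ d i}

lemma isPoly_to_matrix {k : ℕ} {S : Set (Fin k → ℝ)} (h : IsPolyhedralMW S) :
    ∃ (m : ℕ) (A : Matrix (Fin m) (Fin k) ℝ) (b : Fin m → ℝ),
      S = {z | ∀ i, A.mulVec z i ≤ b i} := by
  classical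
  obtain ⟨ι, _, c, d, rfl⟩ := h
  obtain ⟨e⟩ := Fintype.truncEquivFin ι
  refine ⟨Fintype.card ι, fun i j => c (e.symm i) j, fun i => d (e.symm i), ?_⟩
  ext x
  simp only [Set.mem_setOf_eq, Matrix.mulVec, dotProduct]
  constructor
  · intro h i; exact h _
  · intro h i
    have := h (e i)
    simpa using this

/-- Gluing lemma for Fourier–Motzkin: a common value exists. -/
lemma exists_glue {ι : Type} [Fintype ι] (a e : ι → ℝ)
    (h0 : ∀ i, a i = 0 → 0 ≤ e i)
    (hpn : ∀ i i', 0 < a i → a i' < 0 → 0 ≤ (-a i') * e i + a i * e i') :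
    ∃ t : ℝ, ∀ i, a i * t ≤ e i := by
  classical
  by_cases hP : (univ.filter fun i => 0 < a i).Nonempty
  · obtain ⟨i₀, hi₀mem, hi₀min⟩ := Finset.exists_min_image _ (fun i => e i / a i) hP
    have hi₀pos : 0 < a i₀ := (Finset.mem_filter.mp hi₀mem).2
    have hu : a i₀ * (e i₀ / a i₀) = e i₀ := mul_div_cancel₀ _ (ne_of_gt hi₀pos)
    refine ⟨e i₀ / a i₀, fun i => ?_⟩
    rcases lt_trichotomy (a i) 0 with hneg | hz | hpos
    · have h := hpn i₀ i hi₀pos hneg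
      nlinarith
    · simp [hz]; exact h0 i hz
    · have hmin := hi₀min i (Finset.mem_filter.mpr ⟨Finset.mem_univ _, hpos⟩)
      have := mul_le_mul_of_nonneg_left hmin hpos.le
      have hu' : a i * (e i / a i) = e i := mul_div_cancel₀ _ (ne_of_gt hpos)
      nlinarith
  · by_cases hN : (univ.filter fun i => a i < 0).Nonempty
    · obtain ⟨i₀, hi₀mem, hi₀max⟩ := Finset.exists_max_image _ (fun i => e i / a i) hN
      have hi₀neg : a i₀ < 0 := (Finset.mem_filter.mp hi₀mem).2
      have hu : a i₀ * (e i₀ / a i₀) = e i₀ := mul_div_cancel₀ _ (ne_of_lt hi₀neg)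
      refine ⟨e i₀ / a i₀, fun i => ?_⟩
      rcases lt_trichotomy (a i) 0 with hneg | hz | hpos
      · have hmax := hi₀max i (Finset.mem_filter.mpr ⟨Finset.mem_univ _, hneg⟩)
        have hu' : a i * (e i / a i) = e i := mul_div_cancel₀ _ (ne_of_lt hneg)
        nlinarith
      · simp [hz]; exact h0 i hz
      · exact absurd ⟨i, Finset.mem_filter.mpr ⟨Finset.mem_univ _, hpos⟩⟩ hP
    · refine ⟨0, fun i => ?_⟩
      have hz : a i = 0 := by
        rcases lt_trichotomy (a i) 0 with hneg | hz | hpos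
        · exact absurd ⟨i, Finset.mem_filter.mpr ⟨Finset.mem_univ _, hneg⟩⟩ hN
        · exact hz
        · exact absurd ⟨i, Finset.mem_filter.mpr ⟨Finset.mem_univ _, hpos⟩⟩ hP
      simp [hz]; exact h0 i hz

/-- Fourier–Motzkin elimination: projecting out the last coordinate preserves polyhedrality. -/
lemma isPoly_proj_snoc {k : ℕ} (S : Set (Fin (k+1) → ℝ)) (hS : IsPolyhedralMW S) :
    IsPolyhedralMW {y : Fin k → ℝ | ∃ t, Fin.snoc y t ∈ S} := by
  classical
  obtain ⟨ι, _, c, d, rfl⟩ := hS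
  set a : ι → ℝ := fun i => c i (Fin.last k) with ha
  refine ⟨{i // a i = 0} ⊕ ({i // 0 < a i} × {i' // a i' < 0}), inferInstance,
    Sum.elim (fun i j => c i.1 j.castSucc)
      (fun z j => (-a z.2.1) * c z.1.1 j.castSucc + a z.1.1 * c z.2.1 j.castSucc),
    Sum.elim (fun i => d i.1) (fun z => (-a z.2.1) * d z.1.1 + a z.1.1 * d z.2.1), ?_⟩
  ext y
  have key : ∀ (i : ι) (t : ℝ),
      ∑ j, c i j * (Fin.snoc y t : Fin (k+1) → ℝ) j
        = (∑ j : Fin k, c i j.castSucc * y j) + a i * t := by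
    intro i t
    rw [Fin.sum_univ_castSucc]
    simp [ha]
  set g : ι → ℝ := fun i => ∑ j : Fin k, c i j.castSucc * y j with hg
  constructor
  · rintro ⟨t, ht⟩
    have ht' : ∀ i, g i + a i * t ≤ d i := fun i => by
      have := ht i; rwa [key] at this
    rintro (⟨i, hi⟩ | ⟨⟨i, hi⟩, ⟨i', hi'⟩⟩)
    · simp only [Sum.elim_inl]
      have := ht' i
      rw [hi] at this; linarith [this]
    · simp only [Sum.elim_inr]
      have hsum : ∑ j : Fin k, ((-a i') * c i j.castSucc + a i * c i' j.castSucc) * y j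
          = (-a i') * g i + a i * g i' := by
        simp only [hg, Finset.mul_sum]
        rw [← Finset.sum_add_distrib]
        exact Finset.sum_congr rfl fun j _ => by ring
      rw [hsum]
      have h1 := mul_le_mul_of_nonneg_left (ht' i) (by linarith : (0:ℝ) ≤ -a i')
      have h2 := mul_le_mul_of_nonneg_left (ht' i') hi.le
      nlinarith
  · intro h
    obtain ⟨t, ht⟩ := exists_glue a (fun i => d i - g i)
      (fun i hz => by
        have := h (Sum.inl ⟨i, hz⟩)
        simp only [Sum.elim_inl] at this
        have : g i ≤ d i := this
        show 0 ≤ d i - g i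
        linarith)
      (fun i i' hpos hneg => by
        have := h (Sum.inr ⟨⟨i, hpos⟩, ⟨i', hneg⟩⟩)
        simp only [Sum.elim_inr] at this
        have hsum : ∑ j : Fin k, ((-a i') * c i j.castSucc + a i * c i' j.castSucc) * y j
            = (-a i') * g i + a i * g i' := by
          simp only [hg, Finset.mul_sum]
          rw [← Finset.sum_add_distrib]
          exact Finset.sum_congr rfl fun j _ => by ring
        rw [hsum] at this
        show 0 ≤ -a i' * (d i - g i) + a i * (d i' - g i')
        nlinarith)
    refine ⟨t, fun i => ?_⟩
    rw [key]
    have := ht i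
    simp only [hg] at this ⊢
    linarith

/-- Projecting out the last `r` coordinates preserves polyhedrality. -/
lemma isPoly_proj : ∀ (r : ℕ) {k : ℕ} (S : Set (Fin (k + r) → ℝ)), IsPolyhedralMW S →
    IsPolyhedralMW {y : Fin k → ℝ | ∃ w : Fin r → ℝ, Fin.append y w ∈ S}
  | 0, k, S, hS => by
    have : {y : Fin k → ℝ | ∃ w : Fin 0 → ℝ, Fin.append y w ∈ S} = S := by
      ext y
      constructor
      · rintro ⟨w, hw⟩
        have hw' : Fin.append y w = y := by
          funext i
          rw [Subsingleton.elim w Fin.elim0, Fin.append_elim0]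
          rfl
        rwa [hw'] at hw
      · intro hy
        refine ⟨Fin.elim0, ?_⟩
        have hw' : Fin.append y Fin.elim0 = y := by
          funext i
          rw [Fin.append_elim0]
          rfl
        rwa [hw']
    rw [this]; exact hS
  | (r+1), k, S, hS => by
    have hS' : IsPolyhedralMW {x : Fin (k + r) → ℝ | ∃ t, Fin.snoc x t ∈ S} :=
      isPoly_proj_snoc S hS
    have hproj := isPoly_proj r _ hS'
    have heq : {y : Fin k → ℝ | ∃ w : Fin (r+1) → ℝ, Fin.append y w ∈ S}
        = {y : Fin k → ℝ | ∃ w' : Fin r → ℝ, Fin.append y w' ∈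
            {x : Fin (k + r) → ℝ | ∃ t, Fin.snoc x t ∈ S}} := by
      ext y
      constructor
      · rintro ⟨w, hw⟩
        refine ⟨Fin.init w, w (Fin.last r), ?_⟩
        rwa [← Fin.append_snoc, Fin.snoc_init_self]
      · rintro ⟨w', t, hw⟩
        exact ⟨Fin.snoc w' t, by rwa [Fin.append_snoc]⟩
    rw [heq]; exact hproj


lemma keysum {n p q : ℕ} (c1 : Fin n → ℝ) (c2 : Fin p → ℝ) (c3 : Fin q → ℝ)
    (z : Fin n → ℝ) (μ : Fin p → ℝ) (l : Fin q → ℝ) :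
    ∑ j, Fin.addCases (motive := fun _ => ℝ) c1 (Fin.addCases c2 c3) j *
        Fin.append z (Fin.append μ l) j
      = ∑ i, c1 i * z i + (∑ j, c2 j * μ j + ∑ j, c3 j * l j) := by
  rw [Fin.sum_univ_add]
  simp only [Fin.addCases_left, Fin.addCases_right, Fin.append_left, Fin.append_right]
  rw [Fin.sum_univ_add]
  simp only [Fin.addCases_left, Fin.addCases_right, Fin.append_left, Fin.append_right]

/-- Index type for the constraints of the lifted polyhedron. -/
abbrev MWIdx (n p q : ℕ) : Type := (Fin n ⊕ Fin n) ⊕ ((Fin p ⊕ Fin q) ⊕ Bool)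

/-- Coefficient rows of the lifted polyhedron. -/
def mwC {n p q : ℕ} (Υ : Matrix (Fin n) (Fin p) ℝ) (Γ : Matrix (Fin n) (Fin q) ℝ) :
    MWIdx n p q → Fin (n + (p + q)) → ℝ
  | Sum.inl (Sum.inl i) => Fin.addCases (motive := fun _ => ℝ)
      (fun i' => if i' = i then 1 else 0)
      (Fin.addCases (fun j => -Υ i j) (fun j => -Γ i j))
  | Sum.inl (Sum.inr i) => Fin.addCases (motive := fun _ => ℝ)
      (fun i' => if i' = i then -1 else 0)
      (Fin.addCases (fun j => Υ i j) (fun j => Γ i j))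
  | Sum.inr (Sum.inl (Sum.inl j)) => Fin.addCases (motive := fun _ => ℝ)
      (fun _ => 0) (Fin.addCases (fun j' => if j' = j then -1 else 0) (fun _ => 0))
  | Sum.inr (Sum.inl (Sum.inr j)) => Fin.addCases (motive := fun _ => ℝ)
      (fun _ => 0) (Fin.addCases (fun _ => 0) (fun j' => if j' = j then -1 else 0))
  | Sum.inr (Sum.inr true) => Fin.addCases (motive := fun _ => ℝ)
      (fun _ => 0) (Fin.addCases (fun _ => 0) (fun _ => 1))
  | Sum.inr (Sum.inr false) => Fin.addCases (motive := fun _ => ℝ)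
      (fun _ => 0) (Fin.addCases (fun _ => 0) (fun _ => -1))

/-- Right-hand sides of the lifted polyhedron. -/
def mwD (n p q : ℕ) : MWIdx n p q → ℝ
  | Sum.inl (Sum.inl _) => 0
  | Sum.inl (Sum.inr _) => 0
  | Sum.inr (Sum.inl _) => 0
  | Sum.inr (Sum.inr true) => 1
  | Sum.inr (Sum.inr false) => -1

/-- Weyl direction of the Minkowski–Weyl theorem: every finitely generated set
`{Υ μ + Γ λ | μ ≥ 0, λ ≥ 0, ∑ λ = 1}` is a polyhedron `{z | A z ≤ b}`. -/
theorem weyl_direction (n p q : ℕ) (Υ : Matrix (Fin n) (Fin p) ℝ)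
    (Γ : Matrix (Fin n) (Fin q) ℝ) :
    ∃ (m : ℕ) (A : Matrix (Fin m) (Fin n) ℝ) (b : Fin m → ℝ),
      {z : Fin n → ℝ | ∃ (μ : Fin p → ℝ) (l : Fin q → ℝ),
        (∀ i, 0 ≤ μ i) ∧ (∀ j, 0 ≤ l j) ∧ (∑ j, l j) = 1 ∧
        z = Υ.mulVec μ + Γ.mulVec l} =
      {z : Fin n → ℝ | ∀ i, A.mulVec z i ≤ b i} := by
  classical
  have hQ : IsPolyhedralMW {x : Fin (n + (p + q)) → ℝ |
      ∀ i, ∑ j, mwC Υ Γ i j * x j ≤ mwD n p q i} :=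
    ⟨MWIdx n p q, inferInstance, mwC Υ Γ, mwD n p q, rfl⟩
  have hproj := isPoly_proj (p + q) _ hQ
  obtain ⟨m, A, b, hAb⟩ := isPoly_to_matrix hproj
  refine ⟨m, A, b, ?_⟩
  rw [← hAb]
  ext z
  simp only [Set.mem_setOf_eq]
  constructor
  · rintro ⟨μ, l, hμ, hl, hsum1, rfl⟩
    set z := Υ.mulVec μ + Γ.mulVec l with hz
    refine ⟨Fin.append μ l, ?_⟩
    rintro ((i | i) | ((j | j) | b))
    · simp only [mwC, mwD]
      rw [keysum]
      have h1 : ∑ i', (if i' = i then (1:ℝ) else 0) * z i' = z i := by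
        simp [ite_mul]
      rw [h1]
      have hz' : z i = (∑ j, Υ i j * μ j) + ∑ j, Γ i j * l j := by
        simp [hz, Matrix.mulVec, dotProduct]
      simp only [neg_mul]
      rw [Finset.sum_neg_distrib, Finset.sum_neg_distrib]
      linarith
    · simp only [mwC, mwD]
      rw [keysum]
      have h1 : ∑ i', (if i' = i then (-1:ℝ) else 0) * z i' = -z i := by
        simp [ite_mul]
      rw [h1]
      have hz' : z i = (∑ j, Υ i j * μ j) + ∑ j, Γ i j * l j := by
        simp [hz, Matrix.mulVec, dotProduct]
      linarith
    · simp only [mwC, mwD]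
      rw [keysum]
      have h1 : ∑ j', (if j' = j then (-1:ℝ) else 0) * μ j' = -μ j := by
        simp [ite_mul]
      simp only [zero_mul, Finset.sum_const_zero, h1]
      have := hμ j
      linarith
    · simp only [mwC, mwD]
      rw [keysum]
      have h1 : ∑ j', (if j' = j then (-1:ℝ) else 0) * l j' = -l j := by
        simp [ite_mul]
      simp only [zero_mul, Finset.sum_const_zero, h1]
      have := hl j
      linarith
    · cases b
      · simp only [mwC, mwD]
        rw [keysum]
        simp only [zero_mul, Finset.sum_const_zero, neg_one_mul]
        rw [Finset.sum_neg_distrib]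
        linarith
      · simp only [mwC, mwD]
        rw [keysum]
        simp only [zero_mul, Finset.sum_const_zero, one_mul]
        linarith
  · rintro ⟨w, hw⟩
    set μ : Fin p → ℝ := fun j => w (Fin.castAdd q j) with hμdef
    set l : Fin q → ℝ := fun j => w (Fin.natAdd p j) with hldef
    have hwapp : w = Fin.append μ l := by
      rw [hμdef, hldef, Fin.append_castAdd_natAdd]
    rw [hwapp] at hw
    have hC : ∀ i : MWIdx n p q,
        ∑ j, mwC Υ Γ i j * Fin.append z (Fin.append μ l) j ≤ mwD n p q i := hw
    refine ⟨μ, l, ?_, ?_, ?_, ?_⟩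
    · intro j
      have := hC (Sum.inr (Sum.inl (Sum.inl j)))
      simp only [mwC] at this; rw [keysum] at this
      simp [ite_mul, mwD] at this
      linarith
    · intro j
      have := hC (Sum.inr (Sum.inl (Sum.inr j)))
      simp only [mwC] at this; rw [keysum] at this
      simp [ite_mul, mwD] at this
      linarith
    · have h1 := hC (Sum.inr (Sum.inr true))
      have h2 := hC (Sum.inr (Sum.inr false))
      simp only [mwC] at h1; rw [keysum] at h1
      simp only [mwC] at h2; rw [keysum] at h2
      simp [mwD] at h1 h2
      linarith
    · funext i
      have h1 := hC (Sum.inl (Sum.inl i))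
      have h2 := hC (Sum.inl (Sum.inr i))
      simp only [mwC] at h1 h2
      rw [keysum] at h1
      rw [keysum] at h2
      simp [ite_mul, mwD] at h1 h2
      have hmv : (Υ.mulVec μ + Γ.mulVec l) i = (∑ j, Υ i j * μ j) + ∑ j, Γ i j * l j := by
        simp [Matrix.mulVec, dotProduct]
      rw [hmv]
      linarith
end

section
/- (LNN conjunction satisfies the conjunction shape under its constraints) Let n ≥ 1, α ∈ (1/2, 1], β ∈ ℝ, and w ∈ ℝⁿ satisfy the LNN constraints: wᵢ ≥ 0 for every i, β − α wᵢ ≤ 1 − α for every i, and β − (1 − α) Σᵢ wᵢ ≥ α. Then for every x ∈ [0,1]ⁿ: (i) if xᵢ ≤ 1 − α for some index i, then LNN-∧(x; β, w) ≤ 1 − α; and (ii) if xᵢ ≥ α for every index i, then LNN-∧(x; β, w) ≥ α. -/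
/-- The LNN conjunction satisfies the conjunction shape under the LNN constraints:
low output when some input is low, high output when all inputs are high. -/
theorem lnn_and_shape (n : ℕ) (hn : 1 ≤ n) (α β : ℝ) (hα : 1/2 < α ∧ α ≤ 1)
    (w : Fin n → ℝ) (hw : ∀ i, 0 ≤ w i)
    (hc1 : ∀ i, β - α * w i ≤ 1 - α)
    (hc2 : α ≤ β - (1 - α) * ∑ i, w i) :
    ∀ x : Fin n → ℝ, (∀ i, 0 ≤ x i) → (∀ i, x i ≤ 1) →
      ((∃ i, x i ≤ 1 - α) → max 0 (min 1 (β - ∑ i, w i * (1 - x i))) ≤ 1 - α) ∧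
      ((∀ i, α ≤ x i) → α ≤ max 0 (min 1 (β - ∑ i, w i * (1 - x i)))) := by
  intro x hx0 hx1
  obtain ⟨hα1, hα2⟩ := hα
  constructor
  · rintro ⟨i, hi⟩
    have hle : w i * (1 - x i) ≤ ∑ j, w j * (1 - x j) := by
      apply Finset.single_le_sum (f := fun j => w j * (1 - x j))
      · intro j _
        exact mul_nonneg (hw j) (by linarith [hx1 j])
      · exact Finset.mem_univ i
    have h1 : α * w i ≤ w i * (1 - x i) := by
      have := mul_le_mul_of_nonneg_left (by linarith : α ≤ 1 - x i) (hw i)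
      linarith [this]
    have hz : β - ∑ j, w j * (1 - x j) ≤ 1 - α := by
      have := hc1 i; linarith
    have : min 1 (β - ∑ j, w j * (1 - x j)) ≤ 1 - α :=
      le_trans (min_le_right _ _) hz
    exact max_le (by linarith) this
  · intro hall
    have hsum : ∑ j, w j * (1 - x j) ≤ (1 - α) * ∑ j, w j := by
      rw [Finset.mul_sum]
      apply Finset.sum_le_sum
      intro j _
      have := mul_le_mul_of_nonneg_left (by linarith [hall j] : 1 - x j ≤ 1 - α) (hw j)
      linarith [this]
    have hz : α ≤ β - ∑ j, w j * (1 - x j) := by linarith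
    have : α ≤ min 1 (β - ∑ j, w j * (1 - x j)) := le_min hα2 hz
    exact le_trans this (le_max_right _ _)
end

section
/- (Agreement of LNN conjunction with Boolean conjunction) Let n ≥ 1, α ∈ (1/2, 1], β ∈ ℝ, and w ∈ ℝⁿ satisfy the LNN constraints: wᵢ ≥ 0 for every i, β − α wᵢ ≤ 1 − α for every i, and β − (1 − α) Σᵢ wᵢ ≥ α. Then for every Boolean input x ∈ {0,1}ⁿ: if xᵢ = 1 for every i then LNN-∧(x; β, w) ≥ α > 1/2 (the output lies in the high/true region), and if xᵢ = 0 for some i then LNN-∧(x; β, w) ≤ 1 − α < 1/2 (the output lies in the low/false region). Hence LNN-∧ reproduces the Boolean truth table of conjunction up to the thresholds α and 1 − α. -/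
/-- Agreement of LNN conjunction with Boolean conjunction: on Boolean inputs,
under the LNN constraints, the output lands in the true region `[α,1]` when all
inputs are `1` and in the false region `[0, 1−α]` when some input is `0`. -/
theorem lnn_and_boolean_agreement (n : ℕ) (hn : 1 ≤ n) (α β : ℝ)
    (hα : 1/2 < α ∧ α ≤ 1) (w : Fin n → ℝ) (hw : ∀ i, 0 ≤ w i)
    (hc1 : ∀ i, β - α * w i ≤ 1 - α)
    (hc2 : α ≤ β - (1 - α) * ∑ i, w i) :
    ∀ x : Fin n → ℝ, (∀ i, x i = 0 ∨ x i = 1) →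
      ((∀ i, x i = 1) →
        α ≤ max 0 (min 1 (β - ∑ i, w i * (1 - x i))) ∧ 1/2 < α) ∧
      ((∃ i, x i = 0) →
        max 0 (min 1 (β - ∑ i, w i * (1 - x i))) ≤ 1 - α ∧ 1 - α < 1/2) := by
  obtain ⟨hα1, hα2⟩ := hα
  intro x hx
  constructor
  · intro hall
    refine ⟨?_, hα1⟩
    have hs : ∑ i, w i * (1 - x i) = 0 := by
      apply Finset.sum_eq_zero
      intro i _
      rw [hall i]; ring
    rw [hs, sub_zero]
    have hsum : 0 ≤ ∑ i, w i := Finset.sum_nonneg fun i _ => hw i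
    have hβ : α ≤ β := by nlinarith
    exact le_max_of_le_right (le_min hα2 hβ)
  · intro ⟨i, hi⟩
    refine ⟨?_, by linarith⟩
    have hterm : ∀ j ∈ Finset.univ, 0 ≤ w j * (1 - x j) := by
      intro j _
      rcases hx j with h | h <;> rw [h] <;> nlinarith [hw j]
    have hge : w i * (1 - x i) ≤ ∑ j, w j * (1 - x j) :=
      Finset.single_le_sum hterm (Finset.mem_univ i)
    rw [hi] at hge
    have h1 : β - ∑ j, w j * (1 - x j) ≤ 1 - α := by
      have := hc1 i
      nlinarith [hw i]
    exact max_le (by linarith) (le_trans (min_le_right _ _) h1)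
end

section
/- (LNN disjunction satisfies the disjunction shape under the constraints) Let n ≥ 1, α ∈ (1/2, 1], β ∈ ℝ, and w ∈ ℝⁿ satisfy the LNN constraints: wᵢ ≥ 0 for every i, β − α wᵢ ≤ 1 − α for every i, and β − (1 − α) Σᵢ wᵢ ≥ α. Define LNN-∨(x; β, w) = 1 − LNN-∧(1 − x; β, w) = 1 − relu1(β − Σᵢ wᵢ xᵢ) for x ∈ [0,1]ⁿ. Then: (i) if xᵢ ≥ α for some index i, then LNN-∨(x; β, w) ≥ α; and (ii) if xᵢ ≤ 1 − α for every index i, then LNN-∨(x; β, w) ≤ 1 − α. -/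
/-- The LNN disjunction `LNN-∨(x; β, w) = 1 − relu1(β − ∑ᵢ wᵢ xᵢ)` satisfies the
disjunction shape under the LNN constraints: high output when some input is high,
low output when all inputs are low. -/
theorem lnn_or_shape (n : ℕ) (hn : 1 ≤ n) (α β : ℝ) (hα : 1/2 < α ∧ α ≤ 1)
    (w : Fin n → ℝ) (hw : ∀ i, 0 ≤ w i)
    (hc1 : ∀ i, β - α * w i ≤ 1 - α)
    (hc2 : α ≤ β - (1 - α) * ∑ i, w i) :
    ∀ x : Fin n → ℝ, (∀ i, 0 ≤ x i) → (∀ i, x i ≤ 1) →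
      ((∃ i, α ≤ x i) → α ≤ 1 - max 0 (min 1 (β - ∑ i, w i * x i))) ∧
      ((∀ i, x i ≤ 1 - α) → 1 - max 0 (min 1 (β - ∑ i, w i * x i)) ≤ 1 - α) := by
  intro x hx0 hx1
  have hα1 : α ≤ 1 := hα.2
  constructor
  · rintro ⟨i, hi⟩
    have hsum : α * w i ≤ ∑ j, w j * x j := by
      calc α * w i ≤ w i * x i := by
              rw [mul_comm]; exact mul_le_mul_of_nonneg_left hi (hw i)
        _ ≤ ∑ j, w j * x j :=
              Finset.single_le_sum (fun j _ => mul_nonneg (hw j) (hx0 j))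
                (Finset.mem_univ i)
    have h1 : β - ∑ j, w j * x j ≤ 1 - α := by
      have := hc1 i; linarith
    have h2 : min 1 (β - ∑ j, w j * x j) ≤ 1 - α :=
      le_trans (min_le_right _ _) h1
    have h3 : max 0 (min 1 (β - ∑ j, w j * x j)) ≤ 1 - α :=
      max_le (by linarith) h2
    linarith
  · intro hlow
    have hsum : ∑ j, w j * x j ≤ (1 - α) * ∑ j, w j := by
      rw [Finset.mul_sum]
      apply Finset.sum_le_sum
      intro j _
      rw [mul_comm (1 - α) (w j)]
      exact mul_le_mul_of_nonneg_left (hlow j) (hw j)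
    have h1 : α ≤ β - ∑ j, w j * x j := by linarith
    have h2 : α ≤ min 1 (β - ∑ j, w j * x j) := le_min hα1 h1
    have h3 : α ≤ max 0 (min 1 (β - ∑ j, w j * x j)) :=
      le_trans h2 (le_max_right _ _)
    linarith
end
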